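/- Assume additionally that λ₊ and λ₋ are distinct and are the only nonzero eigenvalues of F̃₃*. Then: (a) there is no C ∈ [0,1] such that C·|v₊(e)|² + (1−C)·|v₋(e)|² = 1/3 holds simultaneously for e = 0, 1, 2; (b) consequently, the natural measure μ_nat — the product probability measure on Σ giving each coordinate the uniform distribution (1/3,1/3,1/3) on {0,1,2} — is not the weak-* limit of any sequence (μ_{η_p})_{p≥1} of measures from the family {μ_η : n ≥ 1, η : ℤ/nℤ → {+,−}}. -/

import Mathlib

open MeasureTheory
open scoped ENNReal

/-- The two-sided shift on `Σ = {0,1,2}^ℤ`. -/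
def shiftMap (ε : ℤ → Fin 3) : ℤ → Fin 3 := fun n => ε (n + 1)

/-- `μ` is the product measure on `{0,1,2}^ℤ` with one-site weights `P n` at coordinate `n`. -/
def IsProductMeasure (μ : Measure (ℤ → Fin 3)) (P : ℤ → Fin 3 → ℝ) : Prop :=
  ∀ (s : Finset ℤ) (g : ℤ → Fin 3),
    μ {ε | ∀ i ∈ s, ε i = g i} = ∏ i ∈ s, ENNReal.ofReal (P i (g i))

/-- The 3×3 discrete Fourier transform. -/
noncomputable def dft3 : Matrix (Fin 3) (Fin 3) ℂ := fun j k =>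
  (((Real.sqrt 3)⁻¹ : ℝ) : ℂ) *
    Complex.exp (-2 * Real.pi * Complex.I * ((j : ℕ) : ℂ) * ((k : ℕ) : ℂ) / 3)

/-- The orthogonal projection of `ℂ³` onto `span(e₀,e₂)`. -/
def pi02 : Matrix (Fin 3) (Fin 3) ℂ := fun i j => if i = j ∧ i ≠ 1 then 1 else 0

/-- The matrix `F̃₃* = F₃* ∘ π₀₂`. -/
noncomputable def F3tilde : Matrix (Fin 3) (Fin 3) ℂ := dft3.conjTranspose * pi02

/-- The weight `P(e) = |v(e)|²`. -/
noncomputable def Pweight (v : Fin 3 → ℂ) (e : Fin 3) : ℝ := ‖v e‖ ^ 2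

/-- The weight `P*(e) = |(F₃v)(e)|²`. -/
noncomputable def PstarWeight (v : Fin 3 → ℂ) (e : Fin 3) : ℝ :=
  ‖dft3.mulVec v e‖ ^ 2

/-- The fraction `t(η)` of symbols `+` in `η`. -/
noncomputable def tplus (n : ℕ) (hn : 0 < n) (η : ZMod n → Bool) : ℝ :=
  haveI : NeZero n := ⟨hn.ne'⟩
  ((Finset.univ.filter fun j => η j = true).card : ℝ) / n

/-- The decay rate `Λ_η = |λ₋|^{2(1-t(η))}·|λ₊|^{2t(η)}`. -/
noncomputable def LamEta (lp lm : ℂ) (n : ℕ) (hn : 0 < n) (η : ZMod n → Bool) : ℝ :=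
  ‖lm‖ ^ (2 * (1 - tplus n hn η)) * ‖lp‖ ^ (2 * tplus n hn η)

/-- The coefficient `C_{η,j} = Π_{m<j} (|λ_{η(m)}|²/Λ_η)`. -/
noncomputable def Cweight (lp lm : ℂ) (n : ℕ) (hn : 0 < n) (η : ZMod n → Bool)
    (j : ZMod n) : ℝ :=
  haveI : NeZero n := ⟨hn.ne'⟩
  ∏ m ∈ Finset.range j.val,
    (‖(if η (m : ZMod n) then lp else lm)‖ ^ 2 / LamEta lp lm n hn η)

/-- The family `μ̃_{η,j}`: each `μt j` is the product probability measure whose factor at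
coordinate `m ∈ ℤ` is `P_{η(j+m)}` if `m ≥ 0` and `P*_{η(j+m)}` if `m < 0`. -/
def IsTildeFamily (vp vm : Fin 3 → ℂ) (n : ℕ) (hn : 0 < n) (η : ZMod n → Bool)
    (μt : ZMod n → Measure (ℤ → Fin 3)) : Prop :=
  ∀ j : ZMod n, IsProbabilityMeasure (μt j) ∧
    IsProductMeasure (μt j) (fun m e =>
      if 0 ≤ m then Pweight (if η (j + (m : ZMod n)) then vp else vm) e
      else PstarWeight (if η (j + (m : ZMod n)) then vp else vm) e)

/-- The eigenmeasure `μ_η = 𝒩_η⁻¹ Σ_j C_{η,j} μ̃_{η,j}`. -/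
noncomputable def muEta (lp lm : ℂ) (n : ℕ) (hn : 0 < n) (η : ZMod n → Bool)
    (μt : ZMod n → Measure (ℤ → Fin 3)) : Measure (ℤ → Fin 3) :=
  haveI : NeZero n := ⟨hn.ne'⟩
  (ENNReal.ofReal (∑ j : ZMod n, Cweight lp lm n hn η j))⁻¹ •
    ∑ j : ZMod n, ENNReal.ofReal (Cweight lp lm n hn η j) • μt j

/-!
Write `ω = exp (2πi/3)`. An eigenvector `v` of `F̃₃*` with eigenvalue `λ ≠ 0` satisfies
`√3 λ v = (v₀ + v₂, v₀ + ω̄ v₂, v₀ + ω v₂)`, so `v₀ ≠ 0` and `v₂ = z v₀` where `z = √3 λ - 1` solves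
`z² = 1 + (ω - 1) z`. The two roots of this quadratic have product `-1`, hence imaginary parts of
the same sign, and their sum has positive imaginary part; so `Im z > 0`. Then
`3|λ|² (|v₁|² - |v₂|²) = |v₀|² (|1 + ω̄ z|² - |1 + ω z|²) = 4 Im ω Im z |v₀|² > 0`.

Consequently the observable `ε ↦ 1{ε₀ = 1} - 1{ε₀ = 2}` has expectation at least
`min± (|v±(1)|² - |v±(2)|²) > 0` under every convex combination of the one-site laws `P₊, P₋`, in
particular under every `μ_η`, whose marginal at coordinate `0` is such a combination, whereas its
expectation under the uniform law is `0`.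
-/

open Complex
open scoped ComplexConjugate Real Matrix

lemma normSq_one_add_conj_mul_sub_normSq_one_add_mul (c z : ℂ) :
    normSq (1 + conj c * z) - normSq (1 + c * z) = 4 * c.im * z.im := by
  simp only [normSq_apply, add_re, add_im, mul_re, mul_im, conj_re, conj_im, one_re, one_im]
  ring

lemma im_pos_of_sq_eq_one_add_mul {b z : ℂ} (hb : 0 < b.im) (hz : z ^ 2 = 1 + b * z) :
    0 < z.im := by
  have hz0 : z ≠ 0 := by rintro rfl; norm_num at hz
  have hpartner : b - z = -z⁻¹ := by
    field_simp
    linear_combination -hz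
  have hbim : b.im = z.im + z.im / normSq z := by
    have := congrArg im hpartner
    simp only [sub_im, neg_im, inv_im, neg_div, neg_neg] at this
    linarith
  by_contra! h
  have : z.im / normSq z ≤ 0 := div_nonpos_of_nonpos_of_nonneg h (normSq_nonneg z)
  linarith

noncomputable def omega3 : ℂ := exp (2 * π * I / 3)

lemma isPrimitiveRoot_omega3 : IsPrimitiveRoot omega3 3 := by
  rw [omega3]
  exact_mod_cast isPrimitiveRoot_exp 3 (by norm_num)

lemma omega3_im_pos : 0 < omega3.im := by
  rw [omega3, show 2 * (π : ℂ) * I / 3 = ((2 * π / 3 : ℝ) : ℂ) * I by push_cast; ring,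
    exp_ofReal_mul_I_im]
  exact Real.sin_pos_of_pos_of_lt_pi (by positivity) (by linarith [Real.pi_pos])

lemma conj_omega3 : conj omega3 = omega3 ^ 2 := by
  have h3 := isPrimitiveRoot_omega3.pow_eq_one
  have hnorm : ‖omega3‖ = 1 := isPrimitiveRoot_omega3.norm'_eq_one (by norm_num)
  have hne : omega3 ≠ 0 := isPrimitiveRoot_omega3.ne_zero (by norm_num)
  have : conj omega3 * omega3 = 1 := by
    rw [mul_comm, mul_conj, normSq_eq_norm_sq, hnorm]; norm_num
  apply mul_right_cancel₀ hne
  linear_combination this - h3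

lemma conjTranspose_dft3_apply (j k : Fin 3) :
    dft3ᴴ j k = omega3 ^ ((j : ℕ) * (k : ℕ)) / (√3 : ℝ) := by
  rw [Matrix.conjTranspose_apply, dft3, omega3, ← exp_nat_mul, star_def, map_mul, ← exp_conj,
    conj_ofReal, div_eq_inv_mul, Complex.ofReal_inv, mul_comm]
  congr 2
  simp only [neg_mul, mul_neg, map_neg, map_mul, map_inv₀, map_ofNat, conj_ofReal, conj_I,
    map_natCast, neg_neg, Nat.cast_mul]
  ring

lemma pi02_mulVec (v : Fin 3 → ℂ) : pi02 *ᵥ v = ![v 0, 0, v 2] := by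
  ext i
  fin_cases i <;> simp [Matrix.mulVec, dotProduct, pi02]

lemma F3tilde_mulVec_apply (v : Fin 3 → ℂ) (j : Fin 3) :
    (F3tilde *ᵥ v) j = (v 0 + omega3 ^ (2 * (j : ℕ)) * v 2) / (√3 : ℝ) := by
  rw [F3tilde, ← Matrix.mulVec_mulVec, pi02_mulVec]
  simp only [Matrix.mulVec, dotProduct, Fin.sum_univ_three, conjTranspose_dft3_apply]
  simp only [Fin.isValue, Fin.coe_ofNat_eq_mod, Nat.zero_mod, mul_zero, pow_zero, one_div,
    Nat.succ_eq_add_one, Nat.reduceAdd, Matrix.cons_val_zero, Nat.one_mod, mul_one,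
    Matrix.cons_val_one, add_zero, Nat.mod_succ, Matrix.cons_val]
  ring

lemma F3tilde_eigenvector_eqns {l : ℂ} {v : Fin 3 → ℂ} (hv : F3tilde *ᵥ v = l • v) :
    (√3 : ℝ) * l * v 0 = v 0 + v 2 ∧
    (√3 : ℝ) * l * v 1 = v 0 + conj omega3 * v 2 ∧
    (√3 : ℝ) * l * v 2 = v 0 + omega3 * v 2 := by
  have hs : ((√3 : ℝ) : ℂ) ≠ 0 := by exact_mod_cast (Real.sqrt_pos.2 three_pos).ne'
  have h : ∀ j, (√3 : ℝ) * l * v j = v 0 + omega3 ^ (2 * (j : ℕ)) * v 2 := fun j => by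
    have hj := F3tilde_mulVec_apply v j
    rw [hv, Pi.smul_apply, smul_eq_mul, eq_div_iff hs] at hj
    linear_combination hj
  have h4 : omega3 ^ 4 = omega3 := by
    linear_combination omega3 * isPrimitiveRoot_omega3.pow_eq_one
  refine ⟨by simpa using h 0, by simpa [conj_omega3] using h 1, by simpa [h4] using h 2⟩

lemma F3tilde_eigenvector_sq_norm_two_lt_sq_norm_one {l : ℂ} {v : Fin 3 → ℂ} (hl : l ≠ 0)
    (hv0 : v ≠ 0) (hv : F3tilde *ᵥ v = l • v) : ‖v 2‖ ^ 2 < ‖v 1‖ ^ 2 := by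
  obtain ⟨h0, h1, h2⟩ := F3tilde_eigenvector_eqns hv
  set s : ℂ := ((√3 : ℝ) : ℂ) with hs_def
  have hs : s ≠ 0 := by rw [hs_def]; exact_mod_cast (Real.sqrt_pos.2 three_pos).ne'
  obtain ⟨z, hz⟩ : ∃ z, z = s * l - 1 := ⟨_, rfl⟩
  have hv2 : v 2 = z * v 0 := by linear_combination -h0 - v 0 * hz
  have hv00 : v 0 ≠ 0 := by
    intro h
    have hv2' : v 2 = 0 := by rw [hv2, h, mul_zero]
    have hv1' : v 1 = 0 := by
      rw [h, hv2', mul_zero, add_zero] at h1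
      simpa [hs, hl] using h1
    exact hv0 (by ext i; fin_cases i <;> simp [h, hv1', hv2'])
  have hquad : z ^ 2 = 1 + (omega3 - 1) * z := by
    apply mul_right_cancel₀ hv00
    linear_combination h2 - (z + 1 - omega3) * hv2 + v 2 * hz
  have hzim : 0 < z.im :=
    im_pos_of_sq_eq_one_add_mul (by simpa using omega3_im_pos) hquad
  have hsq : normSq s = 3 := by
    rw [hs_def, normSq_ofReal, Real.mul_self_sqrt zero_le_three]
  have hv1n : 3 * normSq l * normSq (v 1) = normSq (v 0) * normSq (1 + conj omega3 * z) := by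
    rw [← hsq, ← normSq_mul, ← normSq_mul, ← normSq_mul, h1, hv2]; ring_nf
  have hv2n : 3 * normSq l * normSq (v 2) = normSq (v 0) * normSq (1 + omega3 * z) := by
    rw [← hsq, ← normSq_mul, ← normSq_mul, ← normSq_mul, h2, hv2]; ring_nf
  have hgap : 0 < 3 * normSq l * (normSq (v 1) - normSq (v 2)) := by
    rw [mul_sub, hv1n, hv2n, ← mul_sub, normSq_one_add_conj_mul_sub_normSq_one_add_mul]
    exact mul_pos (normSq_pos.2 hv00) (mul_pos (mul_pos four_pos omega3_im_pos) hzim)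
  rw [Complex.sq_norm, Complex.sq_norm, ← sub_pos]
  exact pos_of_mul_pos_right hgap (mul_nonneg zero_le_three (normSq_nonneg l))

lemma IsProductMeasure.measure_eval_eq {μ : Measure (ℤ → Fin 3)} {P : ℤ → Fin 3 → ℝ}
    (h : IsProductMeasure μ P) (i : ℤ) (e : Fin 3) :
    μ {ε | ε i = e} = ENNReal.ofReal (P i e) := by
  simpa using h {i} (fun _ => e)

lemma integrable_comp_eval (μ : Measure (ℤ → Fin 3)) [IsFiniteMeasure μ] (g : Fin 3 → ℝ)
    (i : ℤ) : Integrable (fun ε => g (ε i)) μ :=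
  Integrable.comp_measurable Integrable.of_finite (measurable_pi_apply i)

lemma IsProductMeasure.integral_comp_eval {μ : Measure (ℤ → Fin 3)} [IsFiniteMeasure μ]
    {P : ℤ → Fin 3 → ℝ} (h : IsProductMeasure μ P) {i : ℤ} (hP : ∀ e, 0 ≤ P i e)
    (g : Fin 3 → ℝ) : ∫ ε, g (ε i) ∂μ = ∑ e, g e * P i e := by
  rw [← integral_map (measurable_pi_apply i).aemeasurable
    (Measurable.of_discrete).aestronglyMeasurable, integral_fintype Integrable.of_finite]
  refine Finset.sum_congr rfl fun e _ => ?_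
  rw [measureReal_def, Measure.map_apply (measurable_pi_apply i) (measurableSet_singleton e)]
  simp only [Set.preimage, Set.mem_singleton_iff]
  rw [IsProductMeasure.measure_eval_eq h, ENNReal.toReal_ofReal (hP e), smul_eq_mul, mul_comm]

lemma le_integral_normalized_sum_smul {α ι : Type*} [MeasurableSpace α] {s : Finset ι}
    {a : ι → ℝ} {ν : ι → Measure α} {f : α → ℝ} {m : ℝ} (ha : ∀ i ∈ s, 0 ≤ a i)
    (hsum : 0 < ∑ i ∈ s, a i) (hf : ∀ i ∈ s, Integrable f (ν i))
    (hm : ∀ i ∈ s, m ≤ ∫ x, f x ∂ν i) :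
    m ≤ ∫ x, f x ∂((ENNReal.ofReal (∑ i ∈ s, a i))⁻¹ • ∑ i ∈ s, ENNReal.ofReal (a i) • ν i) := by
  rw [integral_smul_measure, integral_finsetSum_measure
    fun i hi => (hf i hi).smul_measure ENNReal.ofReal_ne_top]
  simp only [integral_smul_measure, smul_eq_mul, ENNReal.toReal_inv,
    ENNReal.toReal_ofReal hsum.le]
  rw [le_inv_mul_iff₀ hsum, Finset.sum_mul]
  refine Finset.sum_le_sum fun i hi => ?_
  rw [ENNReal.toReal_ofReal (ha i hi)]
  exact mul_le_mul_of_nonneg_left (hm i hi) (ha i hi)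

lemma Cweight_nonneg (lp lm : ℂ) (n : ℕ) (hn : 0 < n) (η : ZMod n → Bool) (j : ZMod n) :
    0 ≤ Cweight lp lm n hn η j :=
  Finset.prod_nonneg fun _ _ => div_nonneg (sq_nonneg _) (by unfold LamEta; positivity)

lemma le_integral_muEta {lp lm : ℂ} {vp vm : Fin 3 → ℂ} {n : ℕ} {hn : 0 < n}
    {η : ZMod n → Bool} {μt : ZMod n → Measure (ℤ → Fin 3)}
    (hT : IsTildeFamily vp vm n hn η μt) (g : Fin 3 → ℝ) {m : ℝ}
    (hmp : m ≤ ∑ e, g e * Pweight vp e) (hmm : m ≤ ∑ e, g e * Pweight vm e) :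
    m ≤ ∫ ε, g (ε 0) ∂muEta lp lm n hn η μt := by
  have : NeZero n := ⟨hn.ne'⟩
  have hC := Cweight_nonneg lp lm n hn η
  have hC0 : Cweight lp lm n hn η 0 = 1 := by simp [Cweight]
  refine le_integral_normalized_sum_smul (fun j _ => hC j)
    (Finset.sum_pos' (fun j _ => hC j) ⟨0, Finset.mem_univ _, hC0 ▸ one_pos⟩)
    (fun j _ => have := (hT j).1; integrable_comp_eval _ g 0) (fun j _ => ?_)
  have := (hT j).1
  rw [(hT j).2.integral_comp_eval fun e => by simp [Pweight]]
  simp only [le_refl, if_true, Int.cast_zero, add_zero]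
  cases η j
  · exact hmm
  · exact hmp

theorem natural_measure_not_in_family_general
    (lp lm : ℂ) (hlp : lp ≠ 0) (hlm : lm ≠ 0) (vp vm : Fin 3 → ℂ)
    (hvp : F3tilde.mulVec vp = lp • vp) (hvm : F3tilde.mulVec vm = lm • vm)
    (hvpu : ∑ e, ‖vp e‖ ^ 2 = 1) (hvmu : ∑ e, ‖vm e‖ ^ 2 = 1) :
    (¬ ∃ C : ℝ, 0 ≤ C ∧ C ≤ 1 ∧
        ∀ e : Fin 3,
          C * ‖vp e‖ ^ 2 + (1 - C) * ‖vm e‖ ^ 2 = 1 / 3) ∧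
    ∀ (μnat : Measure (ℤ → Fin 3)), IsProbabilityMeasure μnat →
      IsProductMeasure μnat (fun _ _ => 1 / 3) →
      ∀ (nn : ℕ → ℕ) (hnn : ∀ p, 0 < nn p) (η : ∀ p, ZMod (nn p) → Bool)
        (μt : ∀ p, ZMod (nn p) → Measure (ℤ → Fin 3)),
        (∀ p, IsTildeFamily vp vm (nn p) (hnn p) (η p) (μt p)) →
        ¬ ∀ f : C(ℤ → Fin 3, ℂ),
            Filter.Tendsto (fun p => ∫ ε, f ε ∂(muEta lp lm (nn p) (hnn p) (η p) (μt p)))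
              Filter.atTop (nhds (∫ ε, f ε ∂μnat)) := by
  have hgp := F3tilde_eigenvector_sq_norm_two_lt_sq_norm_one hlp (by rintro rfl; simp at hvpu) hvp
  have hgm := F3tilde_eigenvector_sq_norm_two_lt_sq_norm_one hlm (by rintro rfl; simp at hvmu) hvm
  set m := min (‖vp 1‖ ^ 2 - ‖vp 2‖ ^ 2) (‖vm 1‖ ^ 2 - ‖vm 2‖ ^ 2)
  have hm : 0 < m := lt_min (sub_pos.2 hgp) (sub_pos.2 hgm)
  have hmp : m ≤ ‖vp 1‖ ^ 2 - ‖vp 2‖ ^ 2 := min_le_left _ _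
  have hmm : m ≤ ‖vm 1‖ ^ 2 - ‖vm 2‖ ^ 2 := min_le_right _ _
  refine ⟨fun ⟨C, hC0, hC1, hC⟩ => ?_, fun μnat _ hnat nn hnn η μt hT hconv => ?_⟩
  · linarith [hC 1, hC 2, mul_le_mul_of_nonneg_left hmp hC0,
      mul_le_mul_of_nonneg_left hmm (sub_nonneg.2 hC1)]
  let g : Fin 3 → ℝ := ![0, 1, -1]
  have hg (v : Fin 3 → ℂ) : ∑ e, g e * Pweight v e = ‖v 1‖ ^ 2 - ‖v 2‖ ^ 2 := by
    simp only [Pweight, Fin.sum_univ_three, g, Matrix.cons_val_zero, Matrix.cons_val_one,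
      Matrix.cons_val, zero_mul, one_mul, zero_add, neg_mul]
    ring
  have hle (p : ℕ) : m ≤ ∫ ε, g (ε 0) ∂muEta lp lm (nn p) (hnn p) (η p) (μt p) :=
    le_integral_muEta (hT p) g (hg vp ▸ hmp) (hg vm ▸ hmm)
  have hnat0 : ∫ ε, g (ε 0) ∂μnat = 0 := by
    rw [hnat.integral_comp_eval fun _ => by norm_num]
    simp [g, Fin.sum_univ_three]
  have hlim := hconv ⟨fun ε => (g (ε 0) : ℂ), by fun_prop⟩
  simp only [ContinuousMap.coe_mk, integral_complex_ofReal, hnat0, Filter.tendsto_ofReal_iff]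
    at hlim
  linarith [ge_of_tendsto' hlim hle]

/-- If `λ₊ ≠ λ₋` are the only nonzero eigenvalues of `F̃₃*`, then
(a) no `C ∈ [0,1]` satisfies `C|v₊(e)|² + (1-C)|v₋(e)|² = 1/3` for all `e`, and
(b) the natural measure (the uniform Bernoulli product measure) is not a weak-* limit of
any sequence of measures from the family `{μ_η}`. -/
theorem natural_measure_not_in_family
    (lp lm : ℂ) (hlp : lp ≠ 0) (hlm : lm ≠ 0) (vp vm : Fin 3 → ℂ)
    (hvp : F3tilde.mulVec vp = lp • vp) (hvm : F3tilde.mulVec vm = lm • vm)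
    (hvpu : ∑ e, ‖vp e‖ ^ 2 = 1) (hvmu : ∑ e, ‖vm e‖ ^ 2 = 1)
    (hne : lp ≠ lm)
    (honly : ∀ z : ℂ, z ≠ 0 → (∃ w : Fin 3 → ℂ, w ≠ 0 ∧ F3tilde.mulVec w = z • w) →
      z = lp ∨ z = lm) :
    (¬ ∃ C : ℝ, 0 ≤ C ∧ C ≤ 1 ∧
        ∀ e : Fin 3,
          C * ‖vp e‖ ^ 2 + (1 - C) * ‖vm e‖ ^ 2 = 1 / 3) ∧
    ∀ (μnat : Measure (ℤ → Fin 3)), IsProbabilityMeasure μnat →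
      IsProductMeasure μnat (fun _ _ => 1 / 3) →
      ∀ (nn : ℕ → ℕ) (hnn : ∀ p, 0 < nn p) (η : ∀ p, ZMod (nn p) → Bool)
        (μt : ∀ p, ZMod (nn p) → Measure (ℤ → Fin 3)),
        (∀ p, IsTildeFamily vp vm (nn p) (hnn p) (η p) (μt p)) →
        ¬ ∀ f : C(ℤ → Fin 3, ℂ),
            Filter.Tendsto (fun p => ∫ ε, f ε ∂(muEta lp lm (nn p) (hnn p) (η p) (μt p)))
              Filter.atTop (nhds (∫ ε, f ε ∂μnat)) :=
  natural_measure_not_in_family_general lp lm hlp hlm vp vm hvp hvm hvpu hvmu
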